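/- arXiv:1706.06295 — 2 statements merged into one kernel-verified Lean document; each statement's English description precedes it below -/
import Mathlib

section
/- Let μ be a finite positive Borel measure on ℝ whose support is a compact set containing infinitely many points, let 1 < p < ∞ and n ∈ ℕ, and let P_{n+1,p} be the unique monic real polynomial of degree n+1 minimizing ∫ |P(x)|^p dμ(x) among monic real polynomials of degree n+1. Then every complex zero of P_{n+1,p} lies in the closure of the convex hull of the support of μ, viewed as a subset of ℂ. -/
/-!
Suppose a zero `z` of `P` lies outside the segment `[inf K, sup K] ⊂ ℂ`, where `K` is the
support of `μ`, and let `w` be the point of that segment nearest to `Re z`; every `x ∈ K` is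
strictly closer to `w` than to `z`. The minimal polynomial `D` of `z` over `ℝ` divides `P`,
and since its complex roots are `z` and `z̄`, `|D(x)| = |x - z| ^ deg D` on `ℝ`. Replacing the
factor `D` of `P` by `(X - w) ^ deg D` gives a monic polynomial of the same degree which is
strictly smaller in modulus on `K` off the finitely many zeros of `P / D`; as `K` is infinite,
its `L^p(μ)`-norm is strictly smaller, contradicting minimality.
-/

open MeasureTheory Polynomial

def measureSupport (μ : Measure ℝ) : Set ℝ :=
  {x : ℝ | ∀ U : Set ℝ, IsOpen U → x ∈ U → μ U ≠ 0}

open Set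

theorem measureSupport_eq_support (μ : Measure ℝ) : measureSupport μ = μ.support := by
  ext x
  simp only [measureSupport, Measure.support_eq_forall_isOpen, pos_iff_ne_zero, mem_ofPred_eq]
  exact forall_congr' fun _ => forall_comm

section Support

variable {X : Type*} [TopologicalSpace X] [T2Space X] [HereditarilyLindelofSpace X]
  [MeasurableSpace X] [OpensMeasurableSpace X] {μ : Measure X} [IsFiniteMeasure μ]

theorem Continuous.integrable_of_isCompact_measure_support (hK : IsCompact μ.support)
    {f : X → ℝ} (hf : Continuous f) : Integrable f μ := by
  have := hf.continuousOn.integrableOn_compact (μ := μ) hK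
  rwa [IntegrableOn, Measure.restrict_eq_self_of_ae_mem (s := μ.support)
    Measure.support_mem_ae] at this

theorem integral_pos_of_continuous_of_mem_measure_support (hK : IsCompact μ.support)
    {f : X → ℝ} (hf : Continuous f) (hnonneg : ∀ x ∈ μ.support, 0 ≤ f x) {x₀ : X}
    (hx₀ : x₀ ∈ μ.support) (hpos : 0 < f x₀) : 0 < ∫ x, f x ∂μ := by
  have hae : 0 ≤ᵐ[μ] f := by
    filter_upwards [Measure.support_mem_ae] with x hx using hnonneg x hx
  rw [integral_pos_iff_support_of_nonneg_ae hae
    (hf.integrable_of_isCompact_measure_support hK)]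
  have hnhds : {x | 0 < f x} ∈ nhds x₀ := hf.continuousAt.eventually (lt_mem_nhds hpos)
  exact ((Measure.mem_support_iff_forall x₀).mp hx₀ _ hnhds).trans_le
    (measure_mono fun _ hx => ne_of_gt hx)

end Support

theorem integral_rpow_abs_eval_mul_lt {μ : Measure ℝ} [IsFiniteMeasure μ]
    (hK : IsCompact μ.support) (hinf : μ.support.Infinite) {p : ℝ} (hp : 0 < p)
    {D E S : ℝ[X]} (hS : S ≠ 0) (hED : ∀ x ∈ μ.support, |E.eval x| < |D.eval x|) :
    ∫ x, |(E * S).eval x| ^ p ∂μ < ∫ x, |(D * S).eval x| ^ p ∂μ := by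
  have hcont (R : ℝ[X]) : Continuous fun x => |R.eval x| ^ p :=
    R.continuous.abs.rpow_const fun _ => Or.inr hp.le
  have hle : ∀ x ∈ μ.support, |(E * S).eval x| ^ p ≤ |(D * S).eval x| ^ p := fun x hx => by
    simp only [eval_mul, abs_mul]
    exact Real.rpow_le_rpow (by positivity)
      (mul_le_mul_of_nonneg_right (hED x hx).le (abs_nonneg _)) hp.le
  obtain ⟨x₀, hx₀, hSx₀⟩ := (hinf.sdiff (finite_setOfPred_isRoot hS)).nonempty
  have hlt : |(E * S).eval x₀| ^ p < |(D * S).eval x₀| ^ p := by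
    simp only [eval_mul, abs_mul]
    exact Real.rpow_lt_rpow (by positivity)
      (mul_lt_mul_of_pos_right (hED x₀ hx₀) (abs_pos.mpr hSx₀)) hp
  rw [← sub_pos, ← integral_sub ((hcont _).integrable_of_isCompact_measure_support hK)
    ((hcont _).integrable_of_isCompact_measure_support hK)]
  exact integral_pos_of_continuous_of_mem_measure_support hK ((hcont _).sub (hcont _))
    (fun x hx => sub_nonneg.mpr (hle x hx)) hx₀ (sub_pos.mpr hlt)

theorem Complex.abs_eval_minpoly_real (z : ℂ) (x : ℝ) :
    |(minpoly ℝ z).eval x| = ‖(x : ℂ) - z‖ ^ (minpoly ℝ z).natDegree := by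
  have hz : IsIntegral ℝ z := Algebra.IsIntegral.isIntegral z
  have hroots : ∀ r ∈ (minpoly ℝ z).aroots ℂ, ‖(x : ℂ) - r‖ = ‖(x : ℂ) - z‖ := by
    intro r hr
    obtain ⟨ψ, rfl⟩ : r ∈ range fun ψ : ℂ →ₐ[ℝ] ℂ => ψ z := by
      rw [Algebra.IsAlgebraic.range_eval_eq_rootSet_minpoly, rootSet, Finset.mem_coe,
        Multiset.mem_toFinset]
      exact hr
    rcases Complex.real_algHom_eq_id_or_conj ψ with rfl | rfl
    · rfl
    · rw [← Complex.norm_conj]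
      simp
  calc |(minpoly ℝ z).eval x| = ‖(minpoly ℝ z).aeval (x : ℂ)‖ := by
        rw [show (x : ℂ) = algebraMap ℝ ℂ x from rfl, aeval_algebraMap_apply, coe_aeval_eq_eval,
          Complex.coe_algebraMap, Complex.norm_real, Real.norm_eq_abs]
    _ = (((minpoly ℝ z).aroots ℂ).map fun r => ‖(x : ℂ) - r‖).prod := by
        rw [(IsAlgClosed.splits _).aeval_eq_prod_aroots_of_monic (minpoly.monic hz)]
        exact (map_multiset_prod (normHom : ℂ →*₀ ℝ) _).trans
          (congrArg Multiset.prod (Multiset.map_map _ _ _))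
    _ = ‖(x : ℂ) - z‖ ^ (minpoly ℝ z).natDegree := by
        rw [Multiset.map_congr rfl hroots, Multiset.map_const', Multiset.prod_replicate,
          IsAlgClosed.card_roots_map_eq_natDegree_of_injective _ (algebraMap ℝ ℂ).injective]

theorem abs_sub_projIcc_le {a b : ℝ} (hab : a ≤ b) {x : ℝ} (hx : x ∈ Icc a b) (t : ℝ) :
    |x - projIcc a b hab t| ≤ |x - t| := by
  simpa [projIcc_of_mem hab hx] using abs_projIcc_sub_projIcc hab (c := x) (d := t)

theorem abs_sub_projIcc_lt {a b : ℝ} (hab : a ≤ b) {x : ℝ} (hx : x ∈ Icc a b) {t : ℝ}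
    (ht : t ∉ Icc a b) : |x - projIcc a b hab t| < |x - t| := by
  obtain ⟨hax, hxb⟩ := hx
  rcases not_and_or.mp ht with hta | htb
  · rw [projIcc_of_le_left hab (not_le.mp hta).le, abs_of_nonneg (sub_nonneg.mpr hax),
      abs_of_pos (by linarith [not_le.mp hta])]
    linarith [not_le.mp hta]
  · rw [projIcc_of_right_le hab (not_le.mp htb).le, abs_of_nonpos (sub_nonpos.mpr hxb),
      abs_of_neg (by linarith [not_le.mp htb])]
    linarith [not_le.mp htb]

theorem abs_sub_projIcc_re_lt_norm_sub {a b : ℝ} (hab : a ≤ b) {z : ℂ}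
    (hz : z ∉ ((↑) : ℝ → ℂ) '' Icc a b) {x : ℝ} (hx : x ∈ Icc a b) :
    |x - projIcc a b hab z.re| < ‖(x : ℂ) - z‖ := by
  have hre : |((x : ℂ) - z).re| = |x - z.re| := by simp
  by_cases him : z.im = 0
  · have hzre : z.re ∉ Icc a b := fun h => hz ⟨z.re, h, Complex.ext rfl him.symm⟩
    calc |x - projIcc a b hab z.re| < |x - z.re| := abs_sub_projIcc_lt hab hx hzre
      _ ≤ ‖(x : ℂ) - z‖ := hre ▸ Complex.abs_re_le_norm _
  · calc |x - projIcc a b hab z.re| ≤ |x - z.re| := abs_sub_projIcc_le hab hx z.re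
      _ < ‖(x : ℂ) - z‖ := hre ▸ Complex.abs_re_lt_norm.mpr (by simpa using him)

theorem IsCompact.Icc_csInf_csSup_subset_convexHull {K : Set ℝ} (hK : IsCompact K)
    (hne : K.Nonempty) : Icc (sInf K) (sSup K) ⊆ convexHull ℝ K := by
  rw [← segment_eq_Icc (csInf_le_csSup hne hK.bddBelow hK.bddAbove)]
  exact segment_subset_convexHull (hK.sInf_mem hne) (hK.sSup_mem hne)

theorem IsCompact.ofReal_image_Icc_csInf_csSup_subset_convexHull {K : Set ℝ} (hK : IsCompact K)
    (hne : K.Nonempty) :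
    ((↑) : ℝ → ℂ) '' Icc (sInf K) (sSup K) ⊆ convexHull ℝ (((↑) : ℝ → ℂ) '' K) :=
  (image_mono (hK.Icc_csInf_csSup_subset_convexHull hne)).trans
    (Complex.ofRealAm.toLinearMap.image_convexHull K).le

/-- Fejér's convex hull theorem for polynomials of minimal `L^p(μ)`-norm: every complex
zero of the minimal monic polynomial lies in the closure of the convex hull of the
support of `μ`, viewed inside `ℂ`. -/
theorem zeros_in_convex_hull_of_support
    (μ : Measure ℝ) [IsFiniteMeasure μ]
    (hcomp : IsCompact (measureSupport μ))
    (hinf : (measureSupport μ).Infinite)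
    (p : ℝ) (hp1 : 1 < p) (n : ℕ)
    (P : Polynomial ℝ) (hPmonic : P.Monic) (hPdeg : P.natDegree = n + 1)
    (hPmin : ∀ Q : Polynomial ℝ, Q.Monic → Q.natDegree = n + 1 →
      ∫ x, |P.eval x| ^ p ∂μ ≤ ∫ x, |Q.eval x| ^ p ∂μ) :
    ∀ z : ℂ, (P.map (algebraMap ℝ ℂ)).IsRoot z →
      z ∈ closure (convexHull ℝ ((fun x : ℝ => (x : ℂ)) '' measureSupport μ)) := by
  intro z hz
  by_contra hz_out
  rw [measureSupport_eq_support] at hcomp hinf hz_out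
  set K := μ.support
  have hab : sInf K ≤ sSup K := csInf_le_csSup hinf.nonempty hcomp.bddBelow hcomp.bddAbove
  have hz_Icc : z ∉ ((↑) : ℝ → ℂ) '' Icc (sInf K) (sSup K) := fun h =>
    hz_out (subset_closure (hcomp.ofReal_image_Icc_csInf_csSup_subset_convexHull hinf.nonempty h))
  obtain ⟨S, rfl⟩ : minpoly ℝ z ∣ P :=
    minpoly.dvd ℝ z (by rwa [IsRoot.def, eval_map_algebraMap] at hz)
  have hzint : IsIntegral ℝ z := Algebra.IsIntegral.isIntegral z
  set D := minpoly ℝ z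
  set E := (X - C (projIcc _ _ hab z.re : ℝ)) ^ D.natDegree
  have hD : D.Monic := minpoly.monic hzint
  have hE : E.Monic := (monic_X_sub_C _).pow _
  have hS : S.Monic := hD.of_mul_monic_left hPmonic
  have hED : ∀ x ∈ K, |E.eval x| < |D.eval x| := fun x hx => by
    rw [Complex.abs_eval_minpoly_real, eval_pow, eval_sub, eval_X, eval_C, abs_pow]
    exact pow_lt_pow_left₀ (abs_sub_projIcc_re_lt_norm_sub hab hz_Icc
      (subset_Icc_csInf_csSup hcomp.bddBelow hcomp.bddAbove hx)) (abs_nonneg _)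
      (minpoly.natDegree_pos hzint).ne'
  have hdeg : (E * S).natDegree = n + 1 := by
    rw [← hPdeg, hE.natDegree_mul hS, hD.natDegree_mul hS, natDegree_pow, natDegree_X_sub_C,
      mul_one]
  exact (integral_rpow_abs_eval_mul_lt hcomp hinf (by linarith) hS.ne_zero hED).not_ge
    (hPmin _ (hE.mul hS) hdeg)
end

section
/- Let μ be a finite positive Borel measure on ℝ whose support is a compact set containing infinitely many points, let 2 ≤ p < ∞, let n ∈ ℕ, and let x₀, …, x_n be distinct real numbers. For 𝐱 = (x₀,…,x_n) set P_{n+1}(x) := (x − x₀)⋯(x − x_n) and f_k(𝐱) := ∫ |P_{n+1}(x)|^p / (x − x_k) dμ(x), where the integrand is interpreted as (∏_{j≠k}(x − x_j)) · |x − x_k|^{p−1} sgn(x − x_k) · |∏_{j≠k}(x − x_j)|^{p−1} sgn(∏_{j≠k}(x − x_j)). Then f_k is partially differentiable with respect to x_k, with ∂f_k/∂x_k (𝐱) = (1 − p) ∫ |P_{n+1}(x)|^p / (x − x_k)² dμ(x), and in particular ∂f_k/∂x_k (𝐱) < 0. -/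
open MeasureTheory Polynomial Finset

/-!
With `Q = ∏_{j ≠ k} (· - x_j)` and the odd power `φ_q(u) = |u| ^ q sgn u`, the integrand is
`|Q t| ^ p φ_{p-1}(t - x_k)`, because `Q φ_{p-1}(Q) = |Q| ^ p`. For `q ≥ 1` the function `φ_q` is
differentiable with derivative `q |u| ^ (q - 1)`, which is jointly continuous in `(x_k, t)`; since
`μ` is finite and lives on a compact set, the derivative is dominated by a constant and we may
differentiate under the integral sign. The resulting integrand `|Q t| ^ p |t - x_k| ^ (p - 2)` is
continuous, nonnegative, and positive at every point of the infinite support of `μ` other than the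
`x_j`, so its integral is positive.
-/

open Filter Topology

lemma Real.abs_mul_sign (u : ℝ) : |u| * Real.sign u = u := by
  rcases lt_trichotomy u 0 with h | rfl | h
  · rw [Real.sign_of_neg h, abs_of_neg h]; ring
  · simp
  · rw [Real.sign_of_pos h, abs_of_pos h, mul_one]

lemma Real.mul_sign_self (u : ℝ) : u * Real.sign u = |u| := by
  rcases lt_trichotomy u 0 with h | rfl | h
  · rw [Real.sign_of_neg h, abs_of_neg h]; ring
  · simp
  · rw [Real.sign_of_pos h, abs_of_pos h, mul_one]

noncomputable def signedRpow (q u : ℝ) : ℝ := |u| ^ q * Real.sign u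

lemma mul_signedRpow_self {q : ℝ} (hq : q + 1 ≠ 0) (u : ℝ) :
    u * signedRpow q u = |u| ^ (q + 1) := by
  rcases eq_or_ne u 0 with rfl | hu
  · simp [Real.zero_rpow hq]
  · rw [signedRpow, mul_left_comm, Real.mul_sign_self, Real.rpow_add_one (abs_ne_zero.2 hu)]

lemma mul_signedRpow_mul_signedRpow_self {q : ℝ} (hq : q + 1 ≠ 0) (a b : ℝ) :
    a * |b| ^ q * Real.sign b * |a| ^ q * Real.sign a = |a| ^ (q + 1) * signedRpow q b := by
  rw [← mul_signedRpow_self hq, signedRpow, signedRpow]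
  ring

lemma hasDerivAt_signedRpow {q : ℝ} (hq : 1 ≤ q) (u : ℝ) :
    HasDerivAt (signedRpow q) (q * |u| ^ (q - 1)) u := by
  rcases lt_trichotomy u 0 with hu | rfl | hu
  · have h := ((Real.hasDerivAt_rpow_const (p := q) (Or.inl (neg_ne_zero.2 hu.ne))).comp u
      (hasDerivAt_neg u)).neg
    rw [abs_of_neg hu]
    refine (h.congr_deriv (by simp)).congr_of_eventuallyEq ?_
    filter_upwards [Iio_mem_nhds hu] with v (hv : v < 0)
    simp [signedRpow, abs_of_neg hv, Real.sign_of_neg hv]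
  · rw [hasDerivAt_iff_tendsto_slope]
    have hslope : slope (signedRpow q) 0 =ᶠ[𝓝[≠] 0] fun v => |v| ^ (q - 1) := by
      filter_upwards [self_mem_nhdsWithin] with v (hv : v ≠ 0)
      rw [slope_def_field, signedRpow, signedRpow, Real.sign_zero, mul_zero, sub_zero, sub_zero,
        Real.rpow_sub_one (abs_ne_zero.2 hv), div_eq_div_iff hv (abs_ne_zero.2 hv), mul_assoc,
        mul_comm (Real.sign v), Real.abs_mul_sign]
    have hlim : q * |(0 : ℝ)| ^ (q - 1) = |(0 : ℝ)| ^ (q - 1) := by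
      rcases hq.eq_or_lt with rfl | hq
      · simp
      · simp [Real.zero_rpow (sub_ne_zero.2 hq.ne')]
    rw [tendsto_congr' hslope, hlim]
    exact ((Real.continuous_rpow_const (sub_nonneg.2 hq)).comp continuous_abs).continuousWithinAt
  · have h := Real.hasDerivAt_rpow_const (p := q) (Or.inl hu.ne')
    rw [abs_of_pos hu]
    refine h.congr_of_eventuallyEq ?_
    filter_upwards [Ioi_mem_nhds hu] with v (hv : 0 < v)
    simp [signedRpow, abs_of_pos hv, Real.sign_of_pos hv]

@[fun_prop]
lemma continuous_signedRpow {q : ℝ} (hq : 1 ≤ q) : Continuous (signedRpow q) :=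
  continuous_iff_continuousAt.2 fun u => (hasDerivAt_signedRpow hq u).continuousAt

lemma ae_mem_measureSupport (μ : Measure ℝ) : ∀ᵐ t ∂μ, t ∈ measureSupport μ := by
  refine measure_null_of_locally_null _ fun y hy => ?_
  simp only [measureSupport, Set.mem_compl_iff, Set.mem_ofPred_eq, not_forall, not_not] at hy
  obtain ⟨U, hU, hyU, hμU⟩ := hy
  exact ⟨U, mem_nhdsWithin_of_mem_nhds (hU.mem_nhds hyU), hμU⟩

lemma integral_pos_of_mem_measureSupport {μ : Measure ℝ} {g : ℝ → ℝ} (hg : Continuous g)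
    (hg_nonneg : 0 ≤ g) (hg_int : Integrable g μ) {y : ℝ} (hy : y ∈ measureSupport μ)
    (hgy : 0 < g y) : 0 < ∫ t, g t ∂μ := by
  rw [integral_pos_iff_support_of_nonneg hg_nonneg hg_int]
  exact pos_iff_ne_zero.2 (hy _ (isOpen_ne_fun hg continuous_const) hgy.ne')

section CompactlySupported

variable {α : Type*} [TopologicalSpace α] [MeasurableSpace α] [OpensMeasurableSpace α]
  {μ : Measure α} [IsFiniteMeasure μ] {K : Set α}

lemma Continuous.integrable_of_ae_mem_isCompact {g : α → ℝ} (hg : Continuous g)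
    (hK : IsCompact K) (hμK : ∀ᵐ t ∂μ, t ∈ K) : Integrable g μ := by
  obtain ⟨C, hC⟩ := hK.exists_bound_of_continuousOn hg.continuousOn
  refine Integrable.mono' (integrable_const C) hg.aestronglyMeasurable ?_
  filter_upwards [hμK] with t ht using hC t ht

lemma hasDerivAt_integral_of_continuous_of_ae_mem_isCompact {F F' : ℝ → α → ℝ}
    (hK : IsCompact K) (hμK : ∀ᵐ t ∂μ, t ∈ K) (hF : ∀ s, Continuous (F s))
    (hF' : Continuous (Function.uncurry F')) (hderiv : ∀ s t, HasDerivAt (F · t) (F' s t) s)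
    (s₀ : ℝ) : HasDerivAt (fun s => ∫ t, F s t ∂μ) (∫ t, F' s₀ t ∂μ) s₀ := by
  obtain ⟨C, hC⟩ := ((isCompact_closedBall s₀ 1).prod hK).exists_bound_of_continuousOn
    hF'.continuousOn
  have hbound : ∀ᵐ t ∂μ, ∀ s ∈ Metric.ball s₀ 1, ‖F' s t‖ ≤ C := by
    filter_upwards [hμK] with t ht s hs
    exact hC (s, t) ⟨Metric.ball_subset_closedBall hs, ht⟩
  exact (hasDerivAt_integral_of_dominated_loc_of_deriv_le (Metric.ball_mem_nhds s₀ one_pos)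
    (.of_forall fun s => (hF s).aestronglyMeasurable)
    ((hF s₀).integrable_of_ae_mem_isCompact hK hμK)
    (hF'.comp (Continuous.prodMk_right s₀)).aestronglyMeasurable hbound (integrable_const C)
    (.of_forall fun t s _ => hderiv s t)).2

end CompactlySupported

theorem partial_deriv_fk_xk_general
    (μ : Measure ℝ) [IsFiniteMeasure μ]
    (hcomp : IsCompact (measureSupport μ))
    (hinf : (measureSupport μ).Infinite)
    (p : ℝ) (hp2 : 2 ≤ p) (n : ℕ)
    (x : Fin (n + 1) → ℝ) (k : Fin (n + 1))
    (f : (Fin (n + 1) → ℝ) → ℝ)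
    (hf : f = fun v : Fin (n + 1) → ℝ => ∫ t : ℝ,
      (∏ j ∈ Finset.univ.erase k, (t - v j)) * |t - v k| ^ (p - 1) * Real.sign (t - v k)
        * |∏ j ∈ Finset.univ.erase k, (t - v j)| ^ (p - 1)
        * Real.sign (∏ j ∈ Finset.univ.erase k, (t - v j)) ∂μ) :
    HasDerivAt (fun s : ℝ => f (Function.update x k s))
        ((1 - p) * ∫ t : ℝ,
          |∏ j ∈ Finset.univ.erase k, (t - x j)| ^ p * |t - x k| ^ (p - 2) ∂μ) (x k)
      ∧ (1 - p) * (∫ t : ℝ,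
          |∏ j ∈ Finset.univ.erase k, (t - x j)| ^ p * |t - x k| ^ (p - 2) ∂μ) < 0 := by
  set Q : ℝ → ℝ := fun t => ∏ j ∈ Finset.univ.erase k, (t - x j)
  have hfQ : (fun s => f (Function.update x k s))
      = fun s => ∫ t, |Q t| ^ p * signedRpow (p - 1) (t - s) ∂μ := by
    ext s
    have hQs (t : ℝ) : ∏ j ∈ Finset.univ.erase k, (t - Function.update x k s j) = Q t :=
      Finset.prod_congr rfl fun j hj => by rw [Function.update_of_ne (Finset.ne_of_mem_erase hj)]
    simp only [hf, hQs, Function.update_self,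
      mul_signedRpow_mul_signedRpow_self (show p - 1 + 1 ≠ 0 by linarith), sub_add_cancel]
  have hderiv (s t : ℝ) : HasDerivAt (fun s => |Q t| ^ p * signedRpow (p - 1) (t - s))
      ((1 - p) * (|Q t| ^ p * |t - s| ^ (p - 2))) s := by
    refine (((hasDerivAt_signedRpow (by linarith) (t - s)).comp s
      ((hasDerivAt_id s).const_sub t)).const_mul (|Q t| ^ p)).congr_deriv ?_
    rw [show p - 1 - 1 = p - 2 by ring]
    ring
  have hg : Continuous fun t => |Q t| ^ p * |t - x k| ^ (p - 2) := by
    fun_prop (disch := linarith)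
  obtain ⟨y, hyμ, hyx⟩ := (hinf.sdiff (Set.finite_range x)).nonempty
  have hy (j : Fin (n + 1)) : y - x j ≠ 0 := sub_ne_zero.2 fun h => hyx ⟨j, h.symm⟩
  have hgy : 0 < |Q y| ^ p * |y - x k| ^ (p - 2) :=
    mul_pos (Real.rpow_pos_of_pos (abs_pos.2 (Finset.prod_ne_zero_iff.2 fun j _ => hy j)) _)
      (Real.rpow_pos_of_pos (abs_pos.2 (hy k)) _)
  have hpos := integral_pos_of_mem_measureSupport hg (fun t => by positivity)
    (hg.integrable_of_ae_mem_isCompact hcomp (ae_mem_measureSupport μ)) hyμ hgy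
  refine ⟨?_, mul_neg_of_neg_of_pos (by linarith) hpos⟩
  rw [hfQ, ← integral_const_mul]
  refine hasDerivAt_integral_of_continuous_of_ae_mem_isCompact hcomp (ae_mem_measureSupport μ)
    (fun s => by fun_prop (disch := linarith)) (by fun_prop (disch := linarith)) hderiv (x k)

/-- With `P_{n+1}(x) = ∏_j (x - x_j)` and
`f_k(𝐱) = ∫ |P_{n+1}(x)|^p / (x - x_k) dμ(x)` (the integrand interpreted as the
everywhere-defined product
`(∏_{j≠k}(x - x_j)) · |x - x_k|^{p-1} sgn(x - x_k) · |∏_{j≠k}(x - x_j)|^{p-1} sgn(∏_{j≠k}(x - x_j))`),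
the function `f_k` is partially differentiable with respect to `x_k` with
`∂f_k/∂x_k = (1 - p) ∫ |P_{n+1}(x)|^p / (x - x_k)² dμ(x) < 0`. -/
theorem partial_deriv_fk_xk
    (μ : Measure ℝ) [IsFiniteMeasure μ]
    (hcomp : IsCompact (measureSupport μ))
    (hinf : (measureSupport μ).Infinite)
    (p : ℝ) (hp2 : 2 ≤ p) (n : ℕ)
    (x : Fin (n + 1) → ℝ) (hx : Function.Injective x) (k : Fin (n + 1))
    (f : (Fin (n + 1) → ℝ) → ℝ)
    (hf : f = fun v : Fin (n + 1) → ℝ => ∫ t : ℝ,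
      (∏ j ∈ Finset.univ.erase k, (t - v j)) * |t - v k| ^ (p - 1) * Real.sign (t - v k)
        * |∏ j ∈ Finset.univ.erase k, (t - v j)| ^ (p - 1)
        * Real.sign (∏ j ∈ Finset.univ.erase k, (t - v j)) ∂μ) :
    HasDerivAt (fun s : ℝ => f (Function.update x k s))
        ((1 - p) * ∫ t : ℝ,
          |∏ j ∈ Finset.univ.erase k, (t - x j)| ^ p * |t - x k| ^ (p - 2) ∂μ) (x k)
      ∧ (1 - p) * (∫ t : ℝ,
          |∏ j ∈ Finset.univ.erase k, (t - x j)| ^ p * |t - x k| ^ (p - 2) ∂μ) < 0 :=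
  partial_deriv_fk_xk_general μ hcomp hinf p hp2 n x k f hf
end
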